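/- Almost-sure summability of score approximation errors (Lemma A.7 of the paper, first claim, φ-component): In the TMA(1) setup, define ε_t(θ), its truncation ε̃_t(θ) = σ^{-1}( X_t + Σ_{j=1}^{t−1} ( ∏_{i=1}^{j} A_{t−i}(θ) ) X_{t−j} ), the derivative series D_t(θ) = -σ^{-1} Σ_{j=1}^∞ Σ_{k=1}^{j} ( ∏_{i=1, i≠k}^{j} A_{t−i}(θ) ) X_{t−j}, and its truncation D̃_t(θ) (the same double sum restricted to j ≤ t−1). Then almost surely Σ_{t=1}^∞ sup_{θ∈Θ} | ε_t(θ) D_t(θ) − ε̃_t(θ) D̃_t(θ) | < ∞; equivalently, the differences of the φ-scores of the exact and approximated Gaussian quasi-log-likelihoods are almost surely summable over t. -/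

import Mathlib

open MeasureTheory ProbabilityTheory

/-- TMA(1) parameter space `Θ = {(φ, ξ, σ²) : |φ| ≤ c₁, |φ+ξ| ≤ c₁, c₂ ≤ σ² ≤ c₃}`. -/
def tmaTheta (c₁ c₂ c₃ : ℝ) : Set (ℝ × ℝ × ℝ) :=
  {θ | |θ.1| ≤ c₁ ∧ |θ.1 + θ.2.1| ≤ c₁ ∧ c₂ ≤ θ.2.2 ∧ θ.2.2 ≤ c₃}

/-- Inversion coefficient `A_t(θ) = -(φ + ξ·1{X_t ≤ u})`. -/
noncomputable def tmaA {Ω : Type*} (X : ℤ → Ω → ℝ) (u : ℝ) (θ : ℝ × ℝ × ℝ)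
    (t : ℤ) (ω : Ω) : ℝ :=
  -(θ.1 + θ.2.1 * (if X t ω ≤ u then 1 else 0))

/-- Inverted error `ε_t(θ) = σ⁻¹(X_t + Σ_{j≥1} (∏_{i=1}^j A_{t−i}(θ)) X_{t−j})`, written as
`σ⁻¹ Σ_{j≥0} (∏_{i=1}^j A_{t−i}(θ)) X_{t−j}` (the `j = 0` term is `X_t`), `σ = √(σ²)`. -/
noncomputable def tmaEps {Ω : Type*} (X : ℤ → Ω → ℝ) (u : ℝ) (θ : ℝ × ℝ × ℝ)
    (t : ℤ) (ω : Ω) : ℝ :=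
  (Real.sqrt θ.2.2)⁻¹ *
    ∑' j : ℕ, (∏ i ∈ Finset.Icc 1 j, tmaA X u θ (t - (i : ℤ)) ω) * X (t - j) ω

/-- Truncated inverted error `ε̃_t(θ)`. -/
noncomputable def tmaEpsT {Ω : Type*} (X : ℤ → Ω → ℝ) (u : ℝ) (θ : ℝ × ℝ × ℝ)
    (t : ℕ) (ω : Ω) : ℝ :=
  (Real.sqrt θ.2.2)⁻¹ *
    ∑ j ∈ Finset.range t, (∏ i ∈ Finset.Icc 1 j, tmaA X u θ ((t : ℤ) - (i : ℤ)) ω) *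
      X ((t : ℤ) - (j : ℤ)) ω

/-- Derivative series `D_t(θ) = ∂ε_t/∂φ(θ)`. -/
noncomputable def tmaD {Ω : Type*} (X : ℤ → Ω → ℝ) (u : ℝ) (θ : ℝ × ℝ × ℝ)
    (t : ℤ) (ω : Ω) : ℝ :=
  -(Real.sqrt θ.2.2)⁻¹ *
    ∑' j : ℕ, ∑ k ∈ Finset.Icc 1 j,
      (∏ i ∈ (Finset.Icc 1 j).erase k, tmaA X u θ (t - (i : ℤ)) ω) * X (t - j) ω

/-- Truncated derivative series `D̃_t(θ)`. -/
noncomputable def tmaDT {Ω : Type*} (X : ℤ → Ω → ℝ) (u : ℝ) (θ : ℝ × ℝ × ℝ)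
    (t : ℕ) (ω : Ω) : ℝ :=
  -(Real.sqrt θ.2.2)⁻¹ *
    ∑ j ∈ Finset.range t, ∑ k ∈ Finset.Icc 1 j,
      (∏ i ∈ (Finset.Icc 1 j).erase k, tmaA X u θ ((t : ℤ) - (i : ℤ)) ω) *
        X ((t : ℤ) - (j : ℤ)) ω

/-!
On `Θ` every coefficient satisfies `|A_t(θ)| ≤ c₁ < 1`, so the `j`-th terms of the series for
`ε_t` and `D_t` are bounded by `(j + 1) c₁ʲ |X_{t-j}|`, up to a factor `c₁⁻¹` for `D_t`.
The error `ε_t D_t − ε̃_t D̃_t` only involves the tails `j ≥ t` of these series, which reach back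
to `X₀, X₋₁, …`; hence, uniformly in `θ`, it is at most a constant times
`(t + 1) c₁ᵗ · S_t · S_0` with `S_t = Σ_j (j + 1) c₁ʲ |X_{t-j}|`. Under the model, `|X_s|` is
dominated by two standard Gaussians, so `E |X_s|` is bounded in `s`; therefore
`E Σ_t (t + 1) c₁ᵗ S_t < ∞` and every `S_t` is almost surely finite.
-/

open ENNReal Finset

section SeriesBounds

variable {ι : Type*}

theorem abs_prod_le_pow_card {A : ι → ℝ} {c : ℝ} (hA : ∀ i, |A i| ≤ c) (s : Finset ι) :
    |∏ i ∈ s, A i| ≤ c ^ s.card := by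
  rw [abs_prod, ← prod_const]
  exact prod_le_prod (fun i _ => abs_nonneg _) fun i _ => hA i

theorem abs_sum_prod_erase_le [DecidableEq ι] {A : ι → ℝ} {c : ℝ} (hA : ∀ i, |A i| ≤ c)
    (s : Finset ι) :
    |∑ k ∈ s, ∏ i ∈ s.erase k, A i| ≤ s.card * c ^ (s.card - 1) := by
  calc |∑ k ∈ s, ∏ i ∈ s.erase k, A i| ≤ ∑ k ∈ s, |∏ i ∈ s.erase k, A i| :=
        abs_sum_le_sum_abs _ _
    _ ≤ ∑ k ∈ s, c ^ (s.card - 1) := by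
        refine sum_le_sum fun k hk => ?_
        rw [← card_erase_of_mem hk]
        exact abs_prod_le_pow_card hA _
    _ = s.card * c ^ (s.card - 1) := by rw [sum_const, nsmul_eq_mul]

theorem abs_sum_prod_erase_Icc_le {A : ℕ → ℝ} {c : ℝ} (hc : 0 < c) (hA : ∀ i, |A i| ≤ c)
    (j : ℕ) : |∑ k ∈ Icc 1 j, ∏ i ∈ (Icc 1 j).erase k, A i| ≤ c⁻¹ * ((j + 1) * c ^ j) := by
  refine (abs_sum_prod_erase_le hA _).trans ?_
  rw [Nat.card_Icc, Nat.add_sub_cancel]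
  rcases j with _ | j
  · simp only [Nat.cast_zero, zero_mul]
    positivity
  · have hcancel : c⁻¹ * (((j + 1 : ℕ) + 1) * c ^ (j + 1)) = ((j + 1 : ℕ) + 1) * c ^ j := by
      rw [pow_succ]; field_simp
    rw [Nat.add_sub_cancel, hcancel]
    gcongr
    linarith

theorem abs_tsum_le_tsum_of_abs_le {f w : ℕ → ℝ} (hw : Summable w) (hf : ∀ j, |f j| ≤ w j) :
    |∑' j, f j| ≤ ∑' j, w j :=
  tsum_of_norm_bounded (f := f) hw.hasSum hf

theorem abs_tsum_mul_tsum_sub_sum_mul_sum_le {a b g h : ℕ → ℝ} (hg : Summable g)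
    (hh : Summable h) (ha : ∀ j, |a j| ≤ g j) (hb : ∀ j, |b j| ≤ h j) (n : ℕ) :
    |(∑' j, a j) * (∑' j, b j) - (∑ j ∈ range n, a j) * (∑ j ∈ range n, b j)|
      ≤ (∑' j, g (j + n)) * (∑' j, h j) + (∑' j, g j) * (∑' j, h (j + n)) := by
  have hsb : Summable b := hh.of_norm_bounded hb
  have head_a : |∑ j ∈ range n, a j| ≤ ∑' j, g j :=
    (abs_sum_le_sum_abs _ _).trans <| (sum_le_sum fun j _ => ha j).trans <|
      hg.sum_le_tsum _ fun j _ => (abs_nonneg _).trans (ha j)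
  have tail_a : |∑' j, a (j + n)| ≤ ∑' j, g (j + n) :=
    abs_tsum_le_tsum_of_abs_le ((summable_nat_add_iff n).2 hg) fun j => ha _
  have tail_b : |∑' j, b (j + n)| ≤ ∑' j, h (j + n) :=
    abs_tsum_le_tsum_of_abs_le ((summable_nat_add_iff n).2 hh) fun j => hb _
  rw [← (hg.of_norm_bounded ha).sum_add_tsum_nat_add n]
  calc _ = |(∑' j, a (j + n)) * (∑' j, b j) + (∑ j ∈ range n, a j) * ∑' j, b (j + n)| := by
        rw [← hsb.sum_add_tsum_nat_add n]; congr 1; ring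
    _ ≤ _ := by
      refine (abs_add_le _ _).trans (add_le_add ?_ ?_) <;> rw [abs_mul]
      · exact mul_le_mul tail_a (abs_tsum_le_tsum_of_abs_le hh hb) (abs_nonneg _)
          ((abs_nonneg _).trans tail_a)
      · exact mul_le_mul head_a tail_b (abs_nonneg _) ((abs_nonneg _).trans head_a)

end SeriesBounds

theorem tsum_ofReal_succ_mul_pow_ne_top {c : ℝ} (hc₀ : 0 ≤ c) (hc₁ : c < 1) :
    ∑' j : ℕ, ENNReal.ofReal ((j + 1) * c ^ j) ≠ ⊤ := by
  have hs : Summable fun j : ℕ => ((j : ℝ) + 1) * c ^ j := by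
    simpa [add_mul] using (summable_pow_mul_geometric_of_norm_lt_one 1
      (by rwa [Real.norm_eq_abs, abs_of_nonneg hc₀])).add (summable_geometric_of_lt_one hc₀ hc₁)
  rw [← ENNReal.ofReal_tsum_of_nonneg (fun j => by positivity) hs]
  exact ENNReal.ofReal_ne_top

section Integrals

variable {Ω : Type*} [MeasurableSpace Ω] {μ : Measure Ω}

theorem lintegral_tsum_mul_le {Y : ℕ → Ω → ℝ≥0∞} (hY : ∀ j, AEMeasurable (Y j) μ) {M : ℝ≥0∞}
    (hM : ∀ j, ∫⁻ ω, Y j ω ∂μ ≤ M) (w : ℕ → ℝ≥0∞) :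
    ∫⁻ ω, ∑' j, w j * Y j ω ∂μ ≤ (∑' j, w j) * M := by
  rw [lintegral_tsum fun j => (hY j).const_mul _, ← ENNReal.tsum_mul_right]
  exact ENNReal.tsum_le_tsum fun j =>
    (lintegral_const_mul'' _ (hY j)).trans_le (by gcongr; exact hM j)

theorem ae_tsum_mul_lt_top {Y : ℕ → Ω → ℝ≥0∞} (hY : ∀ j, AEMeasurable (Y j) μ) {M : ℝ≥0∞}
    (hM : ∀ j, ∫⁻ ω, Y j ω ∂μ ≤ M) (hM_ne_top : M ≠ ⊤) {w : ℕ → ℝ≥0∞} (hw : ∑' j, w j ≠ ⊤) :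
    ∀ᵐ ω ∂μ, ∑' j, w j * Y j ω < ⊤ :=
  ae_lt_top' (AEMeasurable.tsum fun j => (hY j).const_mul _)
    ((lintegral_tsum_mul_le hY hM w).trans_lt (ENNReal.mul_lt_top hw.lt_top hM_ne_top.lt_top)).ne

theorem lintegral_ofReal_abs_gaussianReal_lt_top :
    ∫⁻ x, ENNReal.ofReal |x| ∂gaussianReal 0 1 < ⊤ :=
  ((memLp_id_gaussianReal 1).integrable le_rfl).abs.lintegral_lt_top

end Integrals

section TMA

variable {Ω : Type*} (X : ℤ → Ω → ℝ)

theorem abs_tmaA_le (u : ℝ) {c₁ c₂ c₃ : ℝ} {θ : ℝ × ℝ × ℝ} (hθ : θ ∈ tmaTheta c₁ c₂ c₃)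
    (t : ℤ) (ω : Ω) : |tmaA X u θ t ω| ≤ c₁ := by
  unfold tmaA
  rw [abs_neg]
  split_ifs
  · simpa using hθ.2.1
  · simpa using hθ.1

def pastWeight (c : ℝ) (n : ℤ) (ω : Ω) (j : ℕ) : ℝ := (j + 1) * c ^ j * |X (n - j) ω|

theorem pastWeight_nonneg {c : ℝ} (hc : 0 ≤ c) (n : ℤ) (ω : Ω) (j : ℕ) :
    0 ≤ pastWeight X c n ω j := by
  unfold pastWeight; positivity

theorem pastWeight_add_le {c : ℝ} (hc : 0 ≤ c) (n j : ℕ) (ω : Ω) :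
    pastWeight X c n ω (j + n) ≤ (n + 1) * c ^ n * pastWeight X c 0 ω j := by
  have hidx : (n : ℤ) - ((j + n : ℕ) : ℤ) = 0 - j := by push_cast; ring
  have hcoef : ((j + n : ℕ) + 1 : ℝ) ≤ (n + 1) * (j + 1) := by push_cast; nlinarith
  unfold pastWeight
  rw [hidx, pow_add]
  calc ((j + n : ℕ) + 1 : ℝ) * (c ^ j * c ^ n) * |X (0 - j) ω|
      ≤ (n + 1) * (j + 1) * (c ^ j * c ^ n) * |X (0 - j) ω| := by gcongr
    _ = _ := by ring

theorem abs_tmaEps_mul_tmaD_sub_le (u : ℝ) {c₁ c₂ c₃ : ℝ} (hc₁ : 0 < c₁) (hc₂ : 0 < c₂)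
    {θ : ℝ × ℝ × ℝ} (hθ : θ ∈ tmaTheta c₁ c₂ c₃) (n : ℕ) (ω : Ω)
    (hw : Summable (pastWeight X c₁ n ω)) :
    |tmaEps X u θ n ω * tmaD X u θ n ω - tmaEpsT X u θ n ω * tmaDT X u θ n ω|
      ≤ 2 * c₂⁻¹ * c₁⁻¹ * (∑' j, pastWeight X c₁ n ω j) * ∑' j, pastWeight X c₁ n ω (j + n) := by
  set A : ℕ → ℝ := fun i => tmaA X u θ (n - i) ω
  set a : ℕ → ℝ := fun j => (∏ i ∈ Icc 1 j, A i) * X (n - j) ω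
  set b : ℕ → ℝ := fun j => ∑ k ∈ Icc 1 j, (∏ i ∈ (Icc 1 j).erase k, A i) * X (n - j) ω
  have hA : ∀ i, |A i| ≤ c₁ := fun i => abs_tmaA_le X u hθ _ ω
  have ha : ∀ j, |a j| ≤ pastWeight X c₁ n ω j := by
    intro j
    have hprod := abs_prod_le_pow_card hA (Icc 1 j)
    rw [Nat.card_Icc, Nat.add_sub_cancel] at hprod
    have hpow : c₁ ^ j ≤ (j + 1) * c₁ ^ j :=
      le_mul_of_one_le_left (by positivity) (by linarith [j.cast_nonneg (α := ℝ)])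
    simp only [a, pastWeight, abs_mul]
    exact mul_le_mul_of_nonneg_right (hprod.trans hpow) (abs_nonneg _)
  have hb : ∀ j, |b j| ≤ c₁⁻¹ * pastWeight X c₁ n ω j := by
    intro j
    simp only [b, pastWeight, ← sum_mul, abs_mul]
    rw [← mul_assoc]
    exact mul_le_mul_of_nonneg_right (abs_sum_prod_erase_Icc_le hc₁ hA j) (abs_nonneg _)
  set q := (Real.sqrt θ.2.2)⁻¹
  have hq : q ^ 2 ≤ c₂⁻¹ := by
    rw [inv_pow, Real.sq_sqrt (hc₂.le.trans hθ.2.2.1)]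
    exact inv_anti₀ hc₂ hθ.2.2.1
  have hsplit := abs_tsum_mul_tsum_sub_sum_mul_sum_le hw (hw.mul_left c₁⁻¹) ha hb n
  rw [tsum_mul_left, tsum_mul_left] at hsplit
  have hε : tmaEps X u θ n ω = q * ∑' j, a j := rfl
  have hεT : tmaEpsT X u θ n ω = q * ∑ j ∈ range n, a j := rfl
  have hD : tmaD X u θ n ω = -q * ∑' j, b j := rfl
  have hDT : tmaDT X u θ n ω = -q * ∑ j ∈ range n, b j := rfl
  calc _ = q ^ 2 *
        |(∑' j, a j) * (∑' j, b j) - (∑ j ∈ range n, a j) * (∑ j ∈ range n, b j)| := by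
        rw [hε, hεT, hD, hDT, ← abs_of_nonneg (sq_nonneg q), ← abs_mul, ← abs_neg]
        congr 1; ring
    _ ≤ c₂⁻¹ * ((∑' j, pastWeight X c₁ n ω (j + n)) * (c₁⁻¹ * ∑' j, pastWeight X c₁ n ω j)
          + (∑' j, pastWeight X c₁ n ω j) * (c₁⁻¹ * ∑' j, pastWeight X c₁ n ω (j + n))) :=
        mul_le_mul hq hsplit (abs_nonneg _) (inv_nonneg.2 hc₂.le)
    _ = _ := by ring

noncomputable def weightedPast (c : ℝ) (n : ℤ) (ω : Ω) : ℝ≥0∞ :=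
  ∑' j, ENNReal.ofReal (pastWeight X c n ω j)

theorem weightedPast_eq_tsum_mul {c : ℝ} (hc : 0 ≤ c) (n : ℤ) (ω : Ω) :
    weightedPast X c n ω =
      ∑' j : ℕ, ENNReal.ofReal ((j + 1) * c ^ j) * ENNReal.ofReal |X (n - j) ω| :=
  tsum_congr fun j => ENNReal.ofReal_mul (by positivity)

theorem ofReal_abs_tmaEps_mul_tmaD_sub_le (u : ℝ) {c₁ c₂ c₃ : ℝ} (hc₁ : 0 < c₁) (hc₂ : 0 < c₂)
    {θ : ℝ × ℝ × ℝ} (hθ : θ ∈ tmaTheta c₁ c₂ c₃) (n : ℕ) (ω : Ω)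
    (hS : weightedPast X c₁ n ω ≠ ⊤) :
    ENNReal.ofReal |tmaEps X u θ n ω * tmaD X u θ n ω - tmaEpsT X u θ n ω * tmaDT X u θ n ω|
      ≤ ENNReal.ofReal (2 * c₂⁻¹ * c₁⁻¹) * weightedPast X c₁ 0 ω *
        (ENNReal.ofReal ((n + 1) * c₁ ^ n) * weightedPast X c₁ n ω) := by
  have hw0 := pastWeight_nonneg X hc₁.le
  have hw : Summable (pastWeight X c₁ n ω) :=
    (ENNReal.summable_toReal hS).congr fun _ => ENNReal.toReal_ofReal (hw0 _ _ _)
  have htail : ∑' j, ENNReal.ofReal (pastWeight X c₁ n ω (j + n))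
      ≤ ENNReal.ofReal ((n + 1) * c₁ ^ n) * weightedPast X c₁ 0 ω := by
    rw [weightedPast, ← ENNReal.tsum_mul_left]
    refine ENNReal.tsum_le_tsum fun j => ?_
    rw [← ENNReal.ofReal_mul (by positivity)]
    exact ENNReal.ofReal_le_ofReal (pastWeight_add_le X hc₁.le n j ω)
  have hC : 0 ≤ 2 * c₂⁻¹ * c₁⁻¹ := by positivity
  calc _ ≤ ENNReal.ofReal (2 * c₂⁻¹ * c₁⁻¹ * (∑' j, pastWeight X c₁ n ω j) *
        ∑' j, pastWeight X c₁ n ω (j + n)) :=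
        ENNReal.ofReal_le_ofReal (abs_tmaEps_mul_tmaD_sub_le X u hc₁ hc₂ hθ n ω hw)
    _ = ENNReal.ofReal (2 * c₂⁻¹ * c₁⁻¹) * weightedPast X c₁ n ω *
        ∑' j, ENNReal.ofReal (pastWeight X c₁ n ω (j + n)) := by
        rw [ENNReal.ofReal_mul (mul_nonneg hC (tsum_nonneg (hw0 _ _))), ENNReal.ofReal_mul hC,
          ENNReal.ofReal_tsum_of_nonneg (hw0 _ _) hw,
          ENNReal.ofReal_tsum_of_nonneg (fun j => hw0 _ _ _) ((summable_nat_add_iff n).2 hw)]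
        rfl
    _ ≤ ENNReal.ofReal (2 * c₂⁻¹ * c₁⁻¹) * weightedPast X c₁ n ω *
        (ENNReal.ofReal ((n + 1) * c₁ ^ n) * weightedPast X c₁ 0 ω) := by gcongr
    _ = _ := by ring

theorem measurable_weightedPast [MeasurableSpace Ω] (hX : ∀ s, Measurable (X s)) (c : ℝ)
    (n : ℤ) : Measurable (weightedPast X c n) :=
  Measurable.tsum fun _ => ((hX _).abs.const_mul _).ennreal_ofReal

theorem lintegral_weightedPast_le [MeasurableSpace Ω] {μ : Measure Ω}
    (hX : ∀ s, Measurable (X s)) {c : ℝ} (hc : 0 ≤ c) {M : ℝ≥0∞}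
    (hM : ∀ s, ∫⁻ ω, ENNReal.ofReal |X s ω| ∂μ ≤ M) (n : ℤ) :
    ∫⁻ ω, weightedPast X c n ω ∂μ ≤ (∑' j : ℕ, ENNReal.ofReal ((j + 1) * c ^ j)) * M := by
  simp_rw [weightedPast_eq_tsum_mul X hc]
  exact lintegral_tsum_mul_le (fun _ => (hX _).abs.ennreal_ofReal.aemeasurable) (fun _ => hM _) _

end TMA

theorem lintegral_ofReal_abs_le_of_tma {Ω : Type*} [MeasurableSpace Ω] {P : Measure Ω}
    {u c₁ c₂ c₃ φ₀ ξ₀ s₀ : ℝ} (hc₁' : c₁ < 1) (hθ₀ : (φ₀, ξ₀, s₀) ∈ tmaTheta c₁ c₂ c₃)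
    {e X : ℤ → Ω → ℝ} (he : ∀ t, Measurable (e t))
    (heG : ∀ t, P.map (e t) = gaussianReal 0 1)
    (hmodel : ∀ᵐ ω ∂P, ∀ t : ℤ, X t ω =
      (φ₀ + ξ₀ * (if X (t - 1) ω ≤ u then 1 else 0)) * Real.sqrt s₀ * e (t - 1) ω
        + Real.sqrt s₀ * e t ω) (s : ℤ) :
    ∫⁻ ω, ENNReal.ofReal |X s ω| ∂P
      ≤ ENNReal.ofReal (Real.sqrt s₀) * (2 * ∫⁻ x, ENNReal.ofReal |x| ∂gaussianReal 0 1) := by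
  have hσ := Real.sqrt_nonneg s₀
  have hbound : ∀ᵐ ω ∂P, ENNReal.ofReal |X s ω|
      ≤ ENNReal.ofReal (Real.sqrt s₀) *
        (ENNReal.ofReal |e (s - 1) ω| + ENNReal.ofReal |e s ω|) := by
    filter_upwards [hmodel] with ω hω
    have hκ : |φ₀ + ξ₀ * (if X (s - 1) ω ≤ u then 1 else 0)| ≤ 1 := by
      split_ifs
      · simpa using hθ₀.2.1.trans hc₁'.le
      · simpa using hθ₀.1.trans hc₁'.le
    rw [← ENNReal.ofReal_add (abs_nonneg _) (abs_nonneg _), ← ENNReal.ofReal_mul hσ, hω s]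
    refine ENNReal.ofReal_le_ofReal ((abs_add_le _ _).trans ?_)
    rw [abs_mul, abs_mul, abs_mul, abs_of_nonneg hσ, mul_add]
    gcongr
    exact mul_le_of_le_one_left hσ hκ
  have he_moment : ∀ t,
      ∫⁻ ω, ENNReal.ofReal |e t ω| ∂P = ∫⁻ x, ENNReal.ofReal |x| ∂gaussianReal 0 1 :=
    fun t => by rw [← heG t, lintegral_map measurable_abs.ennreal_ofReal (he t)]
  calc _ ≤ _ := lintegral_mono_ae hbound
    _ = _ := by
      rw [lintegral_const_mul' _ _ ENNReal.ofReal_ne_top,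
        lintegral_add_left (he _).abs.ennreal_ofReal, he_moment, he_moment, two_mul]

theorem stmt9_general {Ω : Type*} [MeasurableSpace Ω] (P : Measure Ω)
    (u c₁ c₂ c₃ : ℝ) (hc₁ : 0 < c₁) (hc₁' : c₁ < 1) (hc₂ : 0 < c₂)
    (φ₀ ξ₀ s₀ : ℝ) (hθ₀ : (φ₀, ξ₀, s₀) ∈ tmaTheta c₁ c₂ c₃)
    (e X : ℤ → Ω → ℝ) (he : ∀ t, Measurable (e t)) (hX : ∀ t, Measurable (X t))
    (heG : ∀ t, P.map (e t) = gaussianReal 0 1)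
    (hmodel : ∀ᵐ ω ∂P, ∀ t : ℤ, X t ω =
      (φ₀ + ξ₀ * (if X (t - 1) ω ≤ u then 1 else 0)) * Real.sqrt s₀ * e (t - 1) ω
        + Real.sqrt s₀ * e t ω) :
    ∀ᵐ ω ∂P,
      (∑' t : ℕ, ⨆ θ ∈ tmaTheta c₁ c₂ c₃,
        ENNReal.ofReal
          |tmaEps X u θ ((t : ℤ) + 1) ω * tmaD X u θ ((t : ℤ) + 1) ω
            - tmaEpsT X u θ (t + 1) ω * tmaDT X u θ (t + 1) ω|) < ⊤ := by
  have hw : ∑' j : ℕ, ENNReal.ofReal ((j + 1) * c₁ ^ j) ≠ ⊤ :=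
    tsum_ofReal_succ_mul_pow_ne_top hc₁.le hc₁'
  have hw_succ : ∑' t : ℕ, ENNReal.ofReal ((t + 1 + 1) * c₁ ^ (t + 1)) ≠ ⊤ :=
    ne_top_of_le_ne_top hw <| by
      simpa using ENNReal.tsum_comp_le_tsum_of_injective (add_left_injective 1)
        fun j : ℕ => ENNReal.ofReal ((j + 1) * c₁ ^ j)
  set M := ENNReal.ofReal (Real.sqrt s₀) * (2 * ∫⁻ x, ENNReal.ofReal |x| ∂gaussianReal 0 1)
  have hM : M ≠ ⊤ := ENNReal.mul_ne_top ENNReal.ofReal_ne_top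
    (ENNReal.mul_ne_top ENNReal.ofNat_ne_top lintegral_ofReal_abs_gaussianReal_lt_top.ne)
  have hSM := lintegral_weightedPast_le X hX hc₁.le
    (lintegral_ofReal_abs_le_of_tma hc₁' hθ₀ he heG hmodel)
  have hS : ∀ᵐ ω ∂P, ∀ n : ℤ, weightedPast X c₁ n ω < ⊤ :=
    ae_all_iff.2 fun n => ae_lt_top' (measurable_weightedPast X hX c₁ n).aemeasurable
      ((hSM n).trans_lt (ENNReal.mul_lt_top hw.lt_top hM.lt_top)).ne
  have hG : ∀ᵐ ω ∂P, ∑' t : ℕ, ENNReal.ofReal ((t + 1 + 1) * c₁ ^ (t + 1)) *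
      weightedPast X c₁ ((t : ℤ) + 1) ω < ⊤ :=
    ae_tsum_mul_lt_top (fun _ => (measurable_weightedPast X hX c₁ _).aemeasurable)
      (fun _ => hSM _) (ENNReal.mul_ne_top hw hM) hw_succ
  filter_upwards [hS, hG] with ω hSω hGω
  calc _ ≤ ∑' t : ℕ, ENNReal.ofReal (2 * c₂⁻¹ * c₁⁻¹) * weightedPast X c₁ 0 ω *
        (ENNReal.ofReal ((t + 1 + 1) * c₁ ^ (t + 1)) * weightedPast X c₁ ((t : ℤ) + 1) ω) := by
        refine ENNReal.tsum_le_tsum fun t => iSup₂_le fun θ hθ => ?_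
        have := ofReal_abs_tmaEps_mul_tmaD_sub_le X u hc₁ hc₂ hθ (t + 1) ω (hSω _).ne
        push_cast at this
        exact this
    _ < ⊤ := by
        rw [ENNReal.tsum_mul_left]
        exact ENNReal.mul_lt_top (ENNReal.mul_lt_top ENNReal.ofReal_lt_top (hSω 0)) hGω

/-- Lemma A.7, first claim (φ-component): almost surely
`Σ_{t=1}^∞ sup_{θ∈Θ} |ε_t(θ) D_t(θ) − ε̃_t(θ) D̃_t(θ)| < ∞`, i.e. the differences of the
φ-scores of the exact and approximated Gaussian quasi-log-likelihoods are summable. -/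
theorem stmt9 {Ω : Type*} [MeasurableSpace Ω] (P : Measure Ω) [IsProbabilityMeasure P]
    (u c₁ c₂ c₃ : ℝ) (hc₁ : 0 < c₁) (hc₁' : c₁ < 1) (hc₂ : 0 < c₂) (hc₂₃ : c₂ ≤ c₃)
    (φ₀ ξ₀ s₀ : ℝ) (hθ₀ : (φ₀, ξ₀, s₀) ∈ tmaTheta c₁ c₂ c₃)
    (e X : ℤ → Ω → ℝ) (he : ∀ t, Measurable (e t)) (hX : ∀ t, Measurable (X t))
    (heG : ∀ t, P.map (e t) = gaussianReal 0 1)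
    (hmodel : ∀ᵐ ω ∂P, ∀ t : ℤ, X t ω =
      (φ₀ + ξ₀ * (if X (t - 1) ω ≤ u then 1 else 0)) * Real.sqrt s₀ * e (t - 1) ω
        + Real.sqrt s₀ * e t ω) :
    ∀ᵐ ω ∂P,
      (∑' t : ℕ, ⨆ θ ∈ tmaTheta c₁ c₂ c₃,
        ENNReal.ofReal
          |tmaEps X u θ ((t : ℤ) + 1) ω * tmaD X u θ ((t : ℤ) + 1) ω
            - tmaEpsT X u θ (t + 1) ω * tmaDT X u θ (t + 1) ω|) < ⊤ :=
  stmt9_general P u c₁ c₂ c₃ hc₁ hc₁' hc₂ φ₀ ξ₀ s₀ hθ₀ e X he hX heG hmodel
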